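/- Let ρ be a two-qubit Schmidt-correlated state with coefficients c1, c2, c4, and let ρ' be a two-qubit Schmidt-correlated state with coefficients c1', c2', c4'. Then ρ' is LU equivalent to ρ if and only if there exists a real number δ such that either (c1' = c1, c4' = c4 and c2' = c2·e^{iδ}) or (c1' = c4, c4' = c1 and c2' = c2·e^{iδ}). -/

import Mathlib

open Matrix Kronecker

/-- The two-qubit Schmidt-correlated state
`ρ = c1|00⟩⟨00| + c2|00⟩⟨11| + conj(c2)|11⟩⟨00| + c4|11⟩⟨11|`. -/
noncomputable def scState (c1 c4 : ℝ) (c2 : ℂ) :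
    Matrix (Fin 2 × Fin 2) (Fin 2 × Fin 2) ℂ :=
  Matrix.of fun p q =>
    if p = (0, 0) ∧ q = (0, 0) then (c1 : ℂ)
    else if p = (0, 0) ∧ q = (1, 1) then c2
    else if p = (1, 1) ∧ q = (0, 0) then (starRingEnd ℂ) c2
    else if p = (1, 1) ∧ q = (1, 1) then (c4 : ℂ)
    else 0

/-- Local unitary equivalence of two-qubit states. -/
def LUequiv (ρ' ρ : Matrix (Fin 2 × Fin 2) (Fin 2 × Fin 2) ℂ) : Prop :=
  ∃ U1 U2 : Matrix (Fin 2) (Fin 2) ℂ,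
    U1 ∈ Matrix.unitaryGroup (Fin 2) ℂ ∧ U2 ∈ Matrix.unitaryGroup (Fin 2) ℂ ∧
    ρ' = (U1 ⊗ₖ U2) * ρ * (U1 ⊗ₖ U2)ᴴ

/-!
Local unitaries preserve the purity `tr ρ²` and, since the partial trace over the second qubit
intertwines `U₁ ⊗ U₂`-conjugation with `U₁`-conjugation, also the purity of the reduced state,
which for a Schmidt-correlated state is `diag(c1, c4)`. With `c1 + c4` fixed, `c1² + c4²`
determines `{c1, c4}`, and then `tr ρ² = c1² + c4² + 2|c2|²` determines `|c2|`. Conversely,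
`diag(u, 1) ⊗ 1` with `|u| = 1` multiplies `c2` by `u`, and `σₓ ⊗ σₓ` swaps `c1` and `c4`
while conjugating `c2`.
-/

open Finset

section PartialTrace

variable {m n R : Type*} [Fintype n] [CommRing R] [StarRing R]

def partialTraceRight (M : Matrix (m × n) (m × n) R) : Matrix m m R :=
  of fun i k => ∑ j, M (i, j) (k, j)

theorem partialTraceRight_kronecker_conj [Fintype m] [DecidableEq n] (A : Matrix m m R)
    {B : Matrix n n R} (hB : Bᴴ * B = 1) (M : Matrix (m × n) (m × n) R) :
    partialTraceRight ((A ⊗ₖ B) * M * (A ⊗ₖ B)ᴴ) = A * partialTraceRight M * Aᴴ := by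
  have hB' : ∀ s u, ∑ j, B j s * star (B j u) = if u = s then 1 else 0 := fun s u => by
    simpa [mul_apply, one_apply, mul_comm] using congrFun (congrFun hB u) s
  ext i k
  simp only [partialTraceRight, of_apply, mul_apply, conjTranspose_apply, kroneckerMap_apply,
    Fintype.sum_prod_type, star_mul', sum_mul]
  calc _ = ∑ t, ∑ u, ∑ r, ∑ s, A i r * M (r, s) (t, u) * star (A k t) *
        ∑ j, B j s * star (B j u) := by
        rw [sum_comm]; refine sum_congr rfl fun t _ => ?_
        rw [sum_comm]; refine sum_congr rfl fun u _ => ?_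
        rw [sum_comm]; refine sum_congr rfl fun r _ => ?_
        rw [sum_comm]; refine sum_congr rfl fun s _ => ?_
        rw [mul_sum]; refine sum_congr rfl fun j _ => ?_
        ring
    _ = _ := by
        simp only [hB', mul_ite, mul_one, mul_zero, sum_ite_eq, mem_univ, if_true]
        refine sum_congr rfl fun t _ => ?_
        rw [sum_comm]
        simp only [mul_sum, sum_mul]

end PartialTrace

theorem trace_unitary_conj_sq {n R : Type*} [Fintype n] [DecidableEq n] [CommRing R]
    [StarRing R] {U : Matrix n n R} (hU : U ∈ unitaryGroup n R) (M : Matrix n n R) :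
    trace ((U * M * Uᴴ) ^ 2) = trace (M ^ 2) := by
  have hconj := map_pow (Unitary.conjStarAlgAut R (Matrix n n R) ⟨U, hU⟩) M 2
  simp only [Unitary.conjStarAlgAut_apply, star_eq_conjTranspose] at hconj
  rw [← hconj, trace_mul_cycle, ← star_eq_conjTranspose, Unitary.star_mul_self_of_mem hU, one_mul]

theorem LUequiv.trans {ρ'' ρ' ρ : Matrix (Fin 2 × Fin 2) (Fin 2 × Fin 2) ℂ}
    (h₁ : LUequiv ρ'' ρ') (h₂ : LUequiv ρ' ρ) : LUequiv ρ'' ρ := by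
  obtain ⟨V1, V2, hV1, hV2, rfl⟩ := h₁
  obtain ⟨U1, U2, hU1, hU2, rfl⟩ := h₂
  refine ⟨V1 * U1, V2 * U2, mul_mem hV1 hU1, mul_mem hV2 hU2, ?_⟩
  simp only [mul_kronecker_mul, conjTranspose_mul, mul_assoc]

theorem LUequiv.trace_sq_eq {ρ' ρ : Matrix (Fin 2 × Fin 2) (Fin 2 × Fin 2) ℂ}
    (h : LUequiv ρ' ρ) : trace (ρ' ^ 2) = trace (ρ ^ 2) := by
  obtain ⟨U1, U2, hU1, hU2, rfl⟩ := h
  exact trace_unitary_conj_sq (kronecker_mem_unitary hU1 hU2) ρ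

theorem LUequiv.trace_partialTraceRight_sq_eq {ρ' ρ : Matrix (Fin 2 × Fin 2) (Fin 2 × Fin 2) ℂ}
    (h : LUequiv ρ' ρ) : trace (partialTraceRight ρ' ^ 2) = trace (partialTraceRight ρ ^ 2) := by
  obtain ⟨U1, U2, hU1, hU2, rfl⟩ := h
  rw [partialTraceRight_kronecker_conj U1 (Unitary.star_mul_self_of_mem hU2)]
  exact trace_unitary_conj_sq hU1 _

theorem trace_scState_sq (c1 c4 : ℝ) (c2 : ℂ) :
    trace (scState c1 c4 c2 ^ 2) = ((c1 ^ 2 + c4 ^ 2 + 2 * ‖c2‖ ^ 2 : ℝ) : ℂ) := by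
  simp only [trace, scState, Prod.ext_iff, sq, diag_apply, mul_apply, of_apply, mul_ite, ite_mul,
    zero_mul, Complex.conj_mul', Complex.mul_conj', mul_zero, Fintype.sum_prod_type,
    Fin.sum_univ_two, and_true, zero_ne_one, and_false, if_true, if_false, false_and, one_ne_zero,
    true_and, add_zero, zero_add]
  push_cast
  ring

theorem trace_partialTraceRight_scState_sq (c1 c4 : ℝ) (c2 : ℂ) :
    trace (partialTraceRight (scState c1 c4 c2) ^ 2) = ((c1 ^ 2 + c4 ^ 2 : ℝ) : ℂ) := by
  simp [sq, trace, mul_apply, partialTraceRight, scState, Prod.ext_iff]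

theorem eq_and_eq_or_eq_and_eq_of_add_eq_of_sq_add_sq_eq {a b a' b' : ℝ} (hs : a' + b' = a + b)
    (hq : a' ^ 2 + b' ^ 2 = a ^ 2 + b ^ 2) : (a' = a ∧ b' = b) ∨ (a' = b ∧ b' = a) := by
  have hprod : (a' - a) * (a' - b) = 0 := by
    have hb' : b' = a + b - a' := by linarith
    subst hb'
    linear_combination hq / 2
  rcases mul_eq_zero.mp hprod with h | h
  · exact Or.inl ⟨by linarith, by linarith⟩
  · exact Or.inr ⟨by linarith, by linarith⟩

theorem Complex.norm_eq_norm_iff_exists_eq_mul_exp {w z : ℂ} :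
    ‖w‖ = ‖z‖ ↔ ∃ δ : ℝ, w = z * exp (δ * I) := by
  constructor
  · intro h
    refine ⟨arg w - arg z, ?_⟩
    calc w = ‖z‖ * exp (arg w * I) := by rw [← h, norm_mul_exp_arg_mul_I]
      _ = ‖z‖ * exp (arg z * I) * exp (↑(arg w - arg z) * I) := by
        rw [mul_assoc, ← exp_add]; push_cast; ring_nf
      _ = z * exp (↑(arg w - arg z) * I) := by rw [norm_mul_exp_arg_mul_I]
  · rintro ⟨δ, rfl⟩
    rw [norm_mul, norm_exp_ofReal_mul_I, mul_one]

theorem LUequiv.scState_phase (c1 c4 : ℝ) (c2 : ℂ) {u : ℂ} (hu : ‖u‖ = 1) :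
    LUequiv (scState c1 c4 (u * c2)) (scState c1 c4 c2) := by
  have hu' : u * starRingEnd ℂ u = 1 := by
    rw [Complex.mul_conj', hu]; norm_num
  have hphase : ∀ z, u * z * starRingEnd ℂ u = z := fun z => by
    rw [mul_right_comm, hu', one_mul]
  refine ⟨diagonal ![u, 1], 1, ?_, one_mem _, ?_⟩
  · rw [mem_unitaryGroup_iff, star_eq_conjTranspose, diagonal_conjTranspose,
      diagonal_mul_diagonal]
    ext i j
    fin_cases i <;> fin_cases j <;> simp [hu']
  · ext ⟨i, j⟩ ⟨k, l⟩
    fin_cases i <;> fin_cases j <;> fin_cases k <;> fin_cases l <;>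
      simp [scState, mul_apply, Fintype.sum_prod_type, Prod.ext_iff, hphase,
        mul_comm (starRingEnd ℂ u)]

theorem LUequiv.scState_swap (c1 c4 : ℝ) (c2 : ℂ) :
    LUequiv (scState c4 c1 (starRingEnd ℂ c2)) (scState c1 c4 c2) := by
  have hX : !![(0 : ℂ), 1; 1, 0] ∈ unitaryGroup (Fin 2) ℂ := by
    rw [mem_unitaryGroup_iff, star_eq_conjTranspose]
    ext i j
    fin_cases i <;> fin_cases j <;> simp [mul_apply]
  refine ⟨_, _, hX, hX, ?_⟩
  ext ⟨i, j⟩ ⟨k, l⟩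
  fin_cases i <;> fin_cases j <;> fin_cases k <;> fin_cases l <;>
    simp [scState, mul_apply, Fintype.sum_prod_type, Prod.ext_iff]

theorem LUequiv.scState_of_norm_eq (c1 c4 : ℝ) {c2 c2' : ℂ} (h : ‖c2'‖ = ‖c2‖) :
    LUequiv (scState c1 c4 c2') (scState c1 c4 c2) := by
  obtain ⟨δ, rfl⟩ := Complex.norm_eq_norm_iff_exists_eq_mul_exp.mp h
  rw [mul_comm]
  exact LUequiv.scState_phase c1 c4 c2 (Complex.norm_exp_ofReal_mul_I δ)

theorem LUequiv.scState_iff {c1 c4 c1' c4' : ℝ} {c2 c2' : ℂ} (hsum : c1' + c4' = c1 + c4) :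
    LUequiv (scState c1' c4' c2') (scState c1 c4 c2) ↔
      ((c1' = c1 ∧ c4' = c4) ∨ (c1' = c4 ∧ c4' = c1)) ∧ ‖c2'‖ = ‖c2‖ := by
  constructor
  · intro h
    have hlocal := h.trace_partialTraceRight_sq_eq
    have hglobal := h.trace_sq_eq
    rw [trace_partialTraceRight_scState_sq, trace_partialTraceRight_scState_sq,
      Complex.ofReal_inj] at hlocal
    rw [trace_scState_sq, trace_scState_sq, Complex.ofReal_inj] at hglobal
    refine ⟨eq_and_eq_or_eq_and_eq_of_add_eq_of_sq_add_sq_eq hsum hlocal, ?_⟩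
    exact (pow_left_inj₀ (norm_nonneg _) (norm_nonneg _) two_ne_zero).mp (by linarith)
  · rintro ⟨⟨rfl, rfl⟩ | ⟨rfl, rfl⟩, hnorm⟩
    · exact LUequiv.scState_of_norm_eq _ _ hnorm
    · exact (LUequiv.scState_of_norm_eq _ _ (by rwa [Complex.norm_conj])).trans
        (LUequiv.scState_swap _ _ c2)

theorem sc_LU_classification (c1 c4 c1' c4' : ℝ) (c2 c2' : ℂ)
    (hsum : c1 + c4 = 1)
    (hsum' : c1' + c4' = 1) :
    LUequiv (scState c1' c4' c2') (scState c1 c4 c2) ↔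
      ∃ δ : ℝ,
        (c1' = c1 ∧ c4' = c4 ∧ c2' = c2 * Complex.exp (δ * Complex.I)) ∨
        (c1' = c4 ∧ c4' = c1 ∧ c2' = c2 * Complex.exp (δ * Complex.I)) := by
  rw [LUequiv.scState_iff (hsum'.trans hsum.symm), Complex.norm_eq_norm_iff_exists_eq_mul_exp]
  constructor
  · rintro ⟨⟨h1, h4⟩ | ⟨h1, h4⟩, δ, hδ⟩
    exacts [⟨δ, Or.inl ⟨h1, h4, hδ⟩⟩, ⟨δ, Or.inr ⟨h1, h4, hδ⟩⟩]
  · rintro ⟨δ, ⟨h1, h4, hδ⟩ | ⟨h1, h4, hδ⟩⟩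
    exacts [⟨Or.inl ⟨h1, h4⟩, δ, hδ⟩, ⟨Or.inr ⟨h1, h4⟩, δ, hδ⟩]
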